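/- Let G be a good colored graph (respectively, an almost-good colored graph) and let C be a rainbow triangle in G. Then the graph G \ C obtained by deleting the three edges of C is a good colored graph (respectively, an almost-good colored graph). -/

import Mathlib

/-!
Deleting the triangle changes only its three vertices. A triangle vertex of degree 2 becomes
isolated. One of degree 4 sees exactly two colours, and each of them sits on two of its four
edges (three edges of one colour would make that colour span four vertices), so it keeps both
colours. Two adjacent triangle vertices of degree 4 therefore have a common neighbour `w` off
the triangle, joined to both by edges of the colour of the edge between them. This `w`
reconnects the triangle, which gives connectivity. If a Type X cut vertex of `G \ C` separated
two such vertices, it would have to be `w`, and the colour class of their edge would span four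
vertices. Otherwise all triangle vertices on one side are isolated in `G \ C`; moving them to
the other side exhibits a Type X cut vertex already in `G`.
-/

open scoped Classical

noncomputable section

/-- The degree of a vertex: the number of its neighbors. -/
noncomputable def vdeg {V : Type*} (G : SimpleGraph V) (x : V) : ℕ :=
  (G.neighborSet x).ncard

/-- The color degree of a vertex: the number of distinct colors on its incident edges. -/
noncomputable def colorDeg {V C : Type*} (G : SimpleGraph V) (c : Sym2 V → C) (x : V) : ℕ :=
  {α : C | ∃ y, G.Adj x y ∧ c s(x, y) = α}.ncard

/-- Every triangle of `G` is monochromatic or rainbow. -/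
def TriCond {V C : Type*} (G : SimpleGraph V) (c : Sym2 V → C) : Prop :=
  ∀ x y z : V, G.Adj x y → G.Adj y z → G.Adj x z →
    (c s(x, y) = c s(y, z) ∧ c s(y, z) = c s(x, z)) ∨
    (c s(x, y) ≠ c s(y, z) ∧ c s(y, z) ≠ c s(x, z) ∧ c s(x, y) ≠ c s(x, z))

/-- `v` is a cut vertex of Type X: it has degree 4, and there are pseudoblocks at `v`
(vertex sets `A`, `B` covering `V` with `A ∩ B = {v}` and every edge lying within `A` or
within `B`) such that `v` has two edges into each pseudoblock, the two edges into each
pseudoblock having the same color. (Such a vertex is automatically a cut vertex, since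
any path between the two sides must pass through `v`.) -/
def IsTypeX {V C : Type*} (G : SimpleGraph V) (c : Sym2 V → C) (v : V) : Prop :=
  vdeg G v = 4 ∧
  ∃ A B : Set V, A ∪ B = Set.univ ∧ A ∩ B = {v} ∧
    (∀ e ∈ G.edgeSet, (∀ x ∈ e, x ∈ A) ∨ (∀ x ∈ e, x ∈ B)) ∧
    (∃ a₁ a₂ : V, a₁ ≠ a₂ ∧ a₁ ∈ A ∧ a₂ ∈ A ∧ G.Adj v a₁ ∧ G.Adj v a₂ ∧
      c s(v, a₁) = c s(v, a₂)) ∧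
    (∃ b₁ b₂ : V, b₁ ≠ b₂ ∧ b₁ ∈ B ∧ b₂ ∈ B ∧ G.Adj v b₁ ∧ G.Adj v b₂ ∧
      c s(v, b₁) = c s(v, b₂))

/-- Properties (1)-(5) of a good colored graph: every vertex has even degree, maximum
degree at most 4, every triangle is rainbow or monochromatic, every nonisolated vertex
has color degree exactly 2, and each color class spans at most three vertices. -/
def IsGoodCore {V C : Type*} (G : SimpleGraph V) (c : Sym2 V → C) : Prop :=
  (∀ x, Even (vdeg G x)) ∧ (∀ x, vdeg G x ≤ 4) ∧ TriCond G c ∧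
  (∀ x, vdeg G x ≠ 0 → colorDeg G c x = 2) ∧
  (∀ α : C, {x : V | ∃ y, G.Adj x y ∧ c s(x, y) = α}.ncard ≤ 3)

/-- A good colored graph: properties (1)-(5) together with (6): no cut vertex of Type X. -/
def IsGood {V C : Type*} (G : SimpleGraph V) (c : Sym2 V → C) : Prop :=
  IsGoodCore G c ∧ ∀ v, ¬ IsTypeX G c v

/-- `G` is connected up to isolated vertices. -/
def ConnUpToIso {V : Type*} (G : SimpleGraph V) : Prop :=
  ∀ a b : V, vdeg G a ≠ 0 → vdeg G b ≠ 0 → G.Reachable a b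

/-- An almost-good colored graph: connected (up to isolated vertices), properties
(1), (2), (3), (5), (6) of a good colored graph, and instead of (4): exactly one
nonisolated vertex has color degree 1, this vertex has degree 2, and every other
nonisolated vertex has color degree 2. -/
def IsAlmostGood {V C : Type*} (G : SimpleGraph V) (c : Sym2 V → C) : Prop :=
  ConnUpToIso G ∧
  (∀ x, Even (vdeg G x)) ∧ (∀ x, vdeg G x ≤ 4) ∧ TriCond G c ∧
  (∃! x : V, vdeg G x ≠ 0 ∧ colorDeg G c x = 1) ∧
  (∀ x, vdeg G x ≠ 0 → colorDeg G c x = 1 → vdeg G x = 2) ∧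
  (∀ x, vdeg G x ≠ 0 → colorDeg G c x = 1 ∨ colorDeg G c x = 2) ∧
  (∀ α : C, {x : V | ∃ y, G.Adj x y ∧ c s(x, y) = α}.ncard ≤ 3) ∧
  (∀ v, ¬ IsTypeX G c v)


theorem List.length_le_ncard_of_nodup {α : Type*} {s : Set α} {l : List α} (hs : s.Finite)
    (hl : l.Nodup) (hsub : ∀ a ∈ l, a ∈ s) : l.length ≤ s.ncard := by
  rw [← List.toFinset_card_of_nodup hl, ← Set.ncard_coe_finset]
  exact Set.ncard_le_ncard (fun a ha => hsub a (List.mem_toFinset.mp ha)) hs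

section Colors

variable {V C : Type*} {G H : SimpleGraph V} {c : Sym2 V → C}

def incidentColors (G : SimpleGraph V) (c : Sym2 V → C) (x : V) : Set C :=
  {α | ∃ y, G.Adj x y ∧ c s(x, y) = α}

def colorSpan (G : SimpleGraph V) (c : Sym2 V → C) (α : C) : Set V :=
  {x | ∃ y, G.Adj x y ∧ c s(x, y) = α}

theorem colorDeg_eq_ncard (x : V) : colorDeg G c x = (incidentColors G c x).ncard := rfl

theorem incidentColors_eq_image (x : V) :
    incidentColors G c x = (fun y => c s(x, y)) '' G.neighborSet x := by
  ext α
  simp [incidentColors]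

theorem incidentColors_mono (hle : H ≤ G) (x : V) : incidentColors H c x ⊆ incidentColors G c x :=
  fun _ ⟨y, hy, hα⟩ => ⟨y, hle hy, hα⟩

theorem mem_colorSpan_left {x y : V} (h : G.Adj x y) : x ∈ colorSpan G c (c s(x, y)) :=
  ⟨y, h, rfl⟩

theorem mem_colorSpan_right {x y : V} (h : G.Adj x y) : y ∈ colorSpan G c (c s(x, y)) :=
  ⟨x, h.symm, by rw [Sym2.eq_swap]⟩

theorem colorSpan_mono (hle : H ≤ G) (α : C) : colorSpan H c α ⊆ colorSpan G c α :=
  fun _ ⟨y, hy, hα⟩ => ⟨y, hle hy, hα⟩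

theorem TriCond.mono (hle : H ≤ G) (h : TriCond G c) : TriCond H c :=
  fun x y z hxy hyz hxz => h x y z (hle hxy) (hle hyz) (hle hxz)

variable [Finite V]

theorem vdeg_ne_zero_of_adj {x y : V} (h : G.Adj x y) : vdeg G x ≠ 0 :=
  ((Set.ncard_pos (Set.toFinite _)).mpr ⟨y, h⟩).ne'

theorem vdeg_mono (hle : H ≤ G) (x : V) : vdeg H x ≤ vdeg G x :=
  Set.ncard_le_ncard fun _ h => hle h

theorem incidentColors_finite (x : V) : (incidentColors G c x).Finite := by
  rw [incidentColors_eq_image]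
  exact (Set.toFinite _).image _

theorem colorDeg_mono (hle : H ≤ G) (x : V) : colorDeg H c x ≤ colorDeg G c x :=
  Set.ncard_le_ncard (incidentColors_mono hle x) (incidentColors_finite x)

theorem colorDeg_le_vdeg (x : V) : colorDeg G c x ≤ vdeg G x := by
  rw [colorDeg_eq_ncard, incidentColors_eq_image]
  exact Set.ncard_image_le

theorem incidentColors_eq_pair {x y z : V} (hy : G.Adj x y) (hz : G.Adj x z)
    (hyz : c s(x, y) ≠ c s(x, z)) (hdeg : colorDeg G c x ≤ 2) :
    incidentColors G c x = {c s(x, y), c s(x, z)} := by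
  refine (Set.eq_of_subset_of_ncard_le ?_ ?_ ?_).symm
  · rintro _ (rfl | rfl)
    exacts [⟨y, hy, rfl⟩, ⟨z, hz, rfl⟩]
  · rwa [Set.ncard_pair hyz]
  · exact incidentColors_finite x

end Colors

section Pseudoblocks

variable {V C : Type*} {G H : SimpleGraph V} {c : Sym2 V → C} {v : V} {A B : Set V}

def IsPseudoblockSplit (G : SimpleGraph V) (v : V) (A B : Set V) : Prop :=
  A ∪ B = Set.univ ∧ A ∩ B = {v} ∧ ∀ e ∈ G.edgeSet, e ∈ A.sym2 ∨ e ∈ B.sym2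

def HasMonoPairIn (G : SimpleGraph V) (c : Sym2 V → C) (v : V) (A : Set V) : Prop :=
  ∃ a₁ a₂ : V, a₁ ≠ a₂ ∧ a₁ ∈ A ∧ a₂ ∈ A ∧ G.Adj v a₁ ∧ G.Adj v a₂ ∧ c s(v, a₁) = c s(v, a₂)

theorem isTypeX_iff : IsTypeX G c v ↔ vdeg G v = 4 ∧ ∃ A B,
    IsPseudoblockSplit G v A B ∧ HasMonoPairIn G c v A ∧ HasMonoPairIn G c v B := by
  simp only [IsTypeX, IsPseudoblockSplit, HasMonoPairIn, Set.mem_sym2_iff_subset, and_assoc]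
  rfl

namespace IsPseudoblockSplit

theorem symm (h : IsPseudoblockSplit G v A B) : IsPseudoblockSplit G v B A :=
  ⟨Set.union_comm A B ▸ h.1, Set.inter_comm A B ▸ h.2.1, fun e he => (h.2.2 e he).symm⟩

theorem eq_of_mem_of_mem (h : IsPseudoblockSplit G v A B) {u : V} (hA : u ∈ A) (hB : u ∈ B) :
    u = v :=
  h.2.1.subset ⟨hA, hB⟩

theorem ne_of_mem_of_mem (h : IsPseudoblockSplit G v A B) {a b : V} (ha : a ∈ A) (hb : b ∈ B)
    (hav : a ≠ v) : a ≠ b := by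
  rintro rfl
  exact hav (h.eq_of_mem_of_mem ha hb)

theorem mem_of_adj (h : IsPseudoblockSplit G v A B) {u w : V} (hu : u ∈ A) (huv : u ≠ v)
    (hadj : G.Adj u w) : w ∈ A := by
  rcases h.2.2 s(u, w) hadj with hA | hB
  · exact (Set.mk_mem_sym2_iff.mp hA).2
  · exact absurd (h.eq_of_mem_of_mem hu (Set.mk_mem_sym2_iff.mp hB).1) huv

end IsPseudoblockSplit

theorem HasMonoPairIn.mono {A' : Set V} (hle : H ≤ G) (h : HasMonoPairIn H c v A)
    (hA : ∀ a ∈ A, H.Adj v a → a ∈ A') : HasMonoPairIn G c v A' := by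
  obtain ⟨a₁, a₂, hne, h₁, h₂, hv₁, hv₂, hc⟩ := h
  exact ⟨a₁, a₂, hne, hA a₁ h₁ hv₁, hA a₂ h₂ hv₂, hle hv₁, hle hv₂, hc⟩

end Pseudoblocks

section DeleteWithin

variable {V C : Type*} {G : SimpleGraph V} {c : Sym2 V → C} {T : Set V}

theorem deleteEdges_triangle_eq_sym2 (x y z : V) :
    G.deleteEdges {s(x, y), s(y, z), s(x, z)} = G.deleteEdges ({x, y, z} : Set V).sym2 := by
  ext u w
  simp only [SimpleGraph.deleteEdges_adj, Set.mem_insert_iff, Set.mem_singleton_iff,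
    Set.mk_mem_sym2_iff, Sym2.eq_iff, and_congr_right_iff]
  intro h
  have := h.ne
  constructor <;> intro h' <;> contrapose! h' <;> aesop

theorem deleteEdges_sym2_adj {u w : V} :
    (G.deleteEdges T.sym2).Adj u w ↔ G.Adj u w ∧ ¬(u ∈ T ∧ w ∈ T) := by
  rw [SimpleGraph.deleteEdges_adj, Set.mk_mem_sym2_iff]

theorem deleteEdges_sym2_adj_of_notMem {u w : V} (hu : u ∉ T) :
    (G.deleteEdges T.sym2).Adj u w ↔ G.Adj u w := by
  simp [hu]

theorem neighborSet_deleteEdges_sym2_of_mem {u : V} (hu : u ∈ T) :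
    (G.deleteEdges T.sym2).neighborSet u = G.neighborSet u \ T := by
  ext w
  simp [hu]

theorem vdeg_deleteEdges_sym2_triangle [Finite V] {x y z : V} (hxy : G.Adj x y) (hxz : G.Adj x z)
    (hyz : y ≠ z) : vdeg (G.deleteEdges ({x, y, z} : Set V).sym2) x = vdeg G x - 2 := by
  have hnbr : G.neighborSet x \ {x, y, z} = G.neighborSet x \ {y, z} := by
    ext w
    simp only [Set.mem_sdiff, SimpleGraph.mem_neighborSet, Set.mem_insert_iff,
      Set.mem_singleton_iff, and_congr_right_iff]
    intro hw
    simp [hw.ne']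
  have hsub : ({y, z} : Set V) ⊆ G.neighborSet x := by
    rintro w (rfl | rfl)
    exacts [hxy, hxz]
  rw [vdeg, neighborSet_deleteEdges_sym2_of_mem (by simp), hnbr, Set.ncard_sdiff hsub,
    Set.ncard_pair hyz, vdeg]

theorem vdeg_deleteEdges_sym2_of_notMem {u : V} (hu : u ∉ T) :
    vdeg (G.deleteEdges T.sym2) u = vdeg G u := by
  simp only [vdeg, SimpleGraph.neighborSet, deleteEdges_sym2_adj_of_notMem hu]

theorem colorDeg_deleteEdges_sym2_of_notMem {u : V} (hu : u ∉ T) :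
    colorDeg (G.deleteEdges T.sym2) c u = colorDeg G c u := by
  simp only [colorDeg, deleteEdges_sym2_adj_of_notMem hu]

variable [Finite V]

/-- A walk in `G` leaves `G.deleteEdges T.sym2` only along edges inside `T`, and `hT` bridges
those. -/
theorem ConnUpToIso.deleteEdges_sym2 (hG : ConnUpToIso G)
    (hT : ∀ s ∈ T, ∀ t ∈ T, vdeg (G.deleteEdges T.sym2) s ≠ 0 →
      vdeg (G.deleteEdges T.sym2) t ≠ 0 → (G.deleteEdges T.sym2).Reachable s t) :
    ConnUpToIso (G.deleteEdges T.sym2) := by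
  set H := G.deleteEdges T.sym2
  intro a b ha hb
  have hle : H ≤ G := G.deleteEdges_le _
  have hG0 : ∀ u, vdeg H u ≠ 0 → vdeg G u ≠ 0 := fun u hu => by
    have := vdeg_mono hle u
    omega
  obtain ⟨W⟩ := hG a b (hG0 a ha) (hG0 b hb)
  let Reached (u : V) : Prop :=
    (vdeg H u ≠ 0 → H.Reachable a u) ∧ (u ∈ T → ∀ t ∈ T, vdeg H t ≠ 0 → H.Reachable a t)
  have step : ∀ u w, G.Adj u w → Reached u → Reached w := by
    intro u w huw ⟨hu, huT⟩
    by_cases hH : H.Adj u w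
    · have haw := (hu (vdeg_ne_zero_of_adj hH)).trans hH.reachable
      exact ⟨fun _ => haw, fun hwT t ht h0 =>
        haw.trans (hT w hwT t ht (vdeg_ne_zero_of_adj hH.symm) h0)⟩
    · have hT' : u ∈ T ∧ w ∈ T := by simpa [H, deleteEdges_sym2_adj, huw] using hH
      exact ⟨huT hT'.1 w hT'.2, fun _ => huT hT'.1⟩
  have hwalk : ∀ u u' (W : G.Walk u u'), Reached u → Reached u' := by
    intro u u' W
    induction W with
    | nil => exact id
    | cons h _ ih => exact fun hu => ih (step _ _ h hu)
  exact (hwalk a b W ⟨fun _ => .refl a, fun haT t ht h0 => hT a haT t ht ha h0⟩).1 hb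

theorem IsPseudoblockSplit.of_deleteEdges_sym2 {v : V} {A B : Set V}
    (h : IsPseudoblockSplit (G.deleteEdges T.sym2) v A B) (hv : v ∉ T)
    (hiso : ∀ u ∈ A, u ∈ T → vdeg (G.deleteEdges T.sym2) u = 0) :
    IsPseudoblockSplit G v (A \ T) (B ∪ T) := by
  refine ⟨?_, ?_, ?_⟩
  · refine Set.eq_univ_of_forall fun u => ?_
    have hu : u ∈ A ∪ B := h.1 ▸ Set.mem_univ u
    by_cases huT : u ∈ T <;> aesop
  · ext u
    have hvAB : v ∈ A ∩ B := h.2.1 ▸ rfl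
    constructor
    · rintro ⟨⟨huA, huT⟩, huB | huT'⟩
      exacts [h.eq_of_mem_of_mem huA huB, absurd huT' huT]
    · rintro rfl
      exact ⟨⟨hvAB.1, hv⟩, Or.inl hvAB.2⟩
  · intro e he
    induction e using Sym2.ind with
    | _ u w =>
    by_cases hT : u ∈ T ∧ w ∈ T
    · exact Or.inr (Set.mk_mem_sym2_iff.mpr ⟨Or.inr hT.1, Or.inr hT.2⟩)
    have hH : (G.deleteEdges T.sym2).Adj u w := deleteEdges_sym2_adj.mpr ⟨he, hT⟩
    rcases h.2.2 s(u, w) hH with hA | hB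
    · have notT : ∀ {x y}, (G.deleteEdges T.sym2).Adj x y → x ∈ A → x ∉ T :=
        fun hxy hx hxT => vdeg_ne_zero_of_adj hxy (hiso _ hx hxT)
      rw [Set.mk_mem_sym2_iff] at hA
      exact Or.inl (Set.mk_mem_sym2_iff.mpr
        ⟨⟨hA.1, notT hH hA.1⟩, ⟨hA.2, notT hH.symm hA.2⟩⟩)
    · rw [Set.mk_mem_sym2_iff] at hB ⊢
      exact Or.inr ⟨Or.inl hB.1, Or.inl hB.2⟩

end DeleteWithin

section RainbowTriangle

variable {V C : Type*} {G : SimpleGraph V} {c : Sym2 V → C} {x y z : V}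

def IsRainbowTriangle (G : SimpleGraph V) (c : Sym2 V → C) (x y z : V) : Prop :=
  G.Adj x y ∧ G.Adj y z ∧ G.Adj x z ∧
    c s(x, y) ≠ c s(y, z) ∧ c s(y, z) ≠ c s(x, z) ∧ c s(x, y) ≠ c s(x, z)

namespace IsRainbowTriangle

theorem swap₁₂ (h : IsRainbowTriangle G c x y z) : IsRainbowTriangle G c y x z := by
  obtain ⟨hxy, hyz, hxz, h₁, h₂, h₃⟩ := h
  refine ⟨hxy.symm, hxz, hyz, ?_, h₂.symm, ?_⟩ <;> rwa [Sym2.eq_swap]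

theorem swap₂₃ (h : IsRainbowTriangle G c x y z) : IsRainbowTriangle G c x z y := by
  obtain ⟨hxy, hyz, hxz, h₁, h₂, h₃⟩ := h
  refine ⟨hxz, hyz.symm, hxy, ?_, ?_, h₃.symm⟩ <;> rw [Sym2.eq_swap (a := z)]
  exacts [h₂.symm, h₁.symm]

theorem exists_of_mem (h : IsRainbowTriangle G c x y z) {u : V} (hu : u ∈ ({x, y, z} : Set V)) :
    ∃ q r, IsRainbowTriangle G c u q r ∧ ({u, q, r} : Set V) = {x, y, z} := by
  rcases hu with rfl | rfl | rfl
  · exact ⟨y, z, h, rfl⟩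
  · exact ⟨x, z, h.swap₁₂, Set.insert_comm _ _ _⟩
  · exact ⟨x, y, h.swap₂₃.swap₁₂, by rw [Set.insert_comm, Set.pair_comm]⟩

theorem exists_third (h : IsRainbowTriangle G c x y z) {s t : V}
    (hs : s ∈ ({x, y, z} : Set V)) (ht : t ∈ ({x, y, z} : Set V)) (hst : s ≠ t) :
    ∃ r, IsRainbowTriangle G c s t r ∧ ({s, t, r} : Set V) = {x, y, z} := by
  obtain ⟨q, r, hqr, hT⟩ := h.exists_of_mem hs
  rw [← hT] at ht
  rcases ht with rfl | rfl | rfl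
  · exact absurd rfl hst
  · exact ⟨r, hqr, hT⟩
  · exact ⟨q, hqr.swap₂₃, by rw [← hT, Set.pair_comm]⟩

theorem vdeg_deleteEdges_of_mem [Finite V] (h : IsRainbowTriangle G c x y z) {u : V}
    (hu : u ∈ ({x, y, z} : Set V)) :
    vdeg (G.deleteEdges ({x, y, z} : Set V).sym2) u = vdeg G u - 2 := by
  obtain ⟨q, r, ⟨huq, hqr, hur, -⟩, hT⟩ := h.exists_of_mem hu
  rw [← hT]
  exact vdeg_deleteEdges_sym2_triangle huq hur hqr.ne

end IsRainbowTriangle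

end RainbowTriangle

section Bounds

variable {V C : Type*} {G : SimpleGraph V} {c : Sym2 V → C}

/-- Conditions (1), (2), (5) of goodness, with (4) weakened to colour degree at most 2. -/
structure GoodBounds (G : SimpleGraph V) (c : Sym2 V → C) : Prop where
  even_vdeg : ∀ x, Even (vdeg G x)
  vdeg_le_four : ∀ x, vdeg G x ≤ 4
  colorDeg_le_two : ∀ x, colorDeg G c x ≤ 2
  colorSpan_ncard_le_three : ∀ α, (colorSpan G c α).ncard ≤ 3

variable [Finite V]

theorem IsGood.goodBounds (h : IsGood G c) : GoodBounds G c := by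
  obtain ⟨⟨heven, hle, -, hcd, hspan⟩, -⟩ := h
  refine ⟨heven, hle, fun x => ?_, hspan⟩
  by_cases hx : vdeg G x = 0
  · exact (colorDeg_le_vdeg x).trans (hx.trans_le (Nat.zero_le 2))
  · exact (hcd x hx).le

theorem IsAlmostGood.goodBounds (h : IsAlmostGood G c) : GoodBounds G c := by
  obtain ⟨-, heven, hle, -, -, -, hcd, hspan, -⟩ := h
  refine ⟨heven, hle, fun x => ?_, hspan⟩
  by_cases hx : vdeg G x = 0
  · exact (colorDeg_le_vdeg x).trans (hx.trans_le (Nat.zero_le 2))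
  · rcases hcd x hx with h | h <;> omega

namespace GoodBounds

theorem false_of_four_mem_colorSpan (hb : GoodBounds G c) {α : C} {l : List V} (hl : l.Nodup)
    (hlen : l.length = 4) (hsub : ∀ a ∈ l, a ∈ colorSpan G c α) : False := by
  have := l.length_le_ncard_of_nodup (Set.toFinite _) hl hsub
  have := hb.colorSpan_ncard_le_three α
  omega

theorem colorDeg_eq_two {x y z : V} (hb : GoodBounds G c) (hy : G.Adj x y) (hz : G.Adj x z)
    (hyz : c s(x, y) ≠ c s(x, z)) : colorDeg G c x = 2 := by
  rw [colorDeg_eq_ncard, incidentColors_eq_pair hy hz hyz (hb.colorDeg_le_two x),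
    Set.ncard_pair hyz]

/-- Otherwise the three edges at `x` other than `s(x, y)` all have colour `c s(x, z)`, whose
span would then contain four vertices. -/
theorem exists_adj_color_eq (hb : GoodBounds G c) {x y z : V} (h4 : vdeg G x = 4)
    (hy : G.Adj x y) (hz : G.Adj x z) (hyz : y ≠ z) (hc : c s(x, y) ≠ c s(x, z)) :
    ∃ w, G.Adj x w ∧ w ≠ y ∧ w ≠ z ∧ c s(x, w) = c s(x, y) := by
  by_contra! hw
  have hcolors := incidentColors_eq_pair hy hz hc (hb.colorDeg_le_two x)
  have hsub : G.neighborSet x \ {y, z} ⊆ colorSpan G c (c s(x, z)) \ {x, z} := by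
    rintro w ⟨hxw, hwyz⟩
    simp only [Set.mem_insert_iff, Set.mem_singleton_iff, not_or] at hwyz
    have hcw : c s(x, w) ∈ incidentColors G c x := ⟨w, hxw, rfl⟩
    rw [hcolors] at hcw
    have hcw' : c s(x, w) = c s(x, z) := hcw.resolve_left (hw w hxw hwyz.1 hwyz.2)
    refine ⟨hcw' ▸ mem_colorSpan_right hxw, ?_⟩
    simp [hxw.ne', hwyz.2]
  have hyz_sub : ({y, z} : Set V) ⊆ G.neighborSet x := by
    rintro w (rfl | rfl)
    exacts [hy, hz]
  have hxz_sub : ({x, z} : Set V) ⊆ colorSpan G c (c s(x, z)) := by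
    rintro w (rfl | rfl)
    exacts [mem_colorSpan_left hz, mem_colorSpan_right hz]
  have := Set.ncard_le_ncard hsub
  rw [Set.ncard_sdiff hyz_sub, Set.ncard_sdiff hxz_sub, Set.ncard_pair hyz,
    Set.ncard_pair hz.ne] at this
  have := hb.colorSpan_ncard_le_three (c s(x, z))
  have : (G.neighborSet x).ncard = 4 := h4
  omega

theorem exists_common_neighbor (hb : GoodBounds G c) {x y z : V}
    (h : IsRainbowTriangle G c x y z) (hx : vdeg G x = 4) (hy : vdeg G y = 4) :
    ∃ w, w ∉ ({x, y, z} : Set V) ∧ G.Adj x w ∧ G.Adj y w ∧ c s(x, w) = c s(x, y) := by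
  obtain ⟨hxy, hyz, hxz, h₁, -, h₃⟩ := h
  obtain ⟨w, hxw, hwy, hwz, hcw⟩ := hb.exists_adj_color_eq hx hxy hxz hyz.ne h₃
  obtain ⟨w', hyw', hw'x, hw'z, hcw'⟩ :=
    hb.exists_adj_color_eq hy hxy.symm hyz hxz.ne (by rwa [Sym2.eq_swap])
  rw [Sym2.eq_swap (a := y) (b := x)] at hcw'
  obtain rfl : w = w' := by
    by_contra hne
    refine hb.false_of_four_mem_colorSpan (α := c s(x, y)) (l := [x, y, w, w']) ?_ rfl ?_
    · simp [hxy.ne, hxw.ne, hw'x.symm, hwy.symm, hyw'.ne, hne]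
    · simp only [List.mem_cons, List.not_mem_nil, or_false]
      rintro a (rfl | rfl | rfl | rfl)
      exacts [mem_colorSpan_left hxy, mem_colorSpan_right hxy, hcw ▸ mem_colorSpan_right hxw,
        hcw' ▸ mem_colorSpan_right hyw']
  exact ⟨w, by simp [hxw.ne', hwy, hwz], hxw, hyw', hcw⟩

end GoodBounds

end Bounds

section DeleteRainbowTriangle

variable {V C : Type*} [Finite V] {G : SimpleGraph V} {c : Sym2 V → C} {x y z : V}

namespace GoodBounds

theorem vdeg_eq_four_of_mem (hb : GoodBounds G c) (h : IsRainbowTriangle G c x y z) {u : V}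
    (hu : u ∈ ({x, y, z} : Set V)) (h0 : vdeg (G.deleteEdges ({x, y, z} : Set V).sym2) u ≠ 0) :
    vdeg G u = 4 := by
  rw [h.vdeg_deleteEdges_of_mem hu] at h0
  obtain ⟨k, hk⟩ := hb.even_vdeg u
  have := hb.vdeg_le_four u
  omega

theorem colorDeg_deleteEdges_of_mem (hb : GoodBounds G c) (h : IsRainbowTriangle G c x y z)
    {u : V} (hu : u ∈ ({x, y, z} : Set V))
    (h0 : vdeg (G.deleteEdges ({x, y, z} : Set V).sym2) u ≠ 0) :
    colorDeg (G.deleteEdges ({x, y, z} : Set V).sym2) c u = 2 := by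
  have h4 := hb.vdeg_eq_four_of_mem h hu h0
  obtain ⟨q, r, ⟨huq, hqr, hur, -, -, hc⟩, hT⟩ := h.exists_of_mem hu
  rw [← hT]
  have hadj : ∀ {w}, G.Adj u w → w ≠ q → w ≠ r →
      (G.deleteEdges ({u, q, r} : Set V).sym2).Adj u w := fun huw hwq hwr =>
    deleteEdges_sym2_adj.mpr ⟨huw, fun hT => by simp [huw.ne', hwq, hwr] at hT⟩
  obtain ⟨w, huw, hwq, hwr, hcw⟩ := hb.exists_adj_color_eq h4 huq hur hqr.ne hc
  obtain ⟨w', huw', hw'r, hw'q, hcw'⟩ := hb.exists_adj_color_eq h4 hur huq hqr.ne' hc.symm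
  have hsub : {c s(u, q), c s(u, r)} ⊆
      incidentColors (G.deleteEdges ({u, q, r} : Set V).sym2) c u := by
    rintro _ (rfl | rfl)
    exacts [⟨w, hadj huw hwq hwr, hcw⟩, ⟨w', hadj huw' hw'q hw'r, hcw'⟩]
  have hsup := incidentColors_eq_pair huq hur hc (hb.colorDeg_le_two u) ▸
    incidentColors_mono (c := c) (G.deleteEdges_le ({u, q, r} : Set V).sym2) u
  rw [colorDeg_eq_ncard, ← hsub.antisymm hsup, Set.ncard_pair hc]

theorem reachable_deleteEdges_of_mem (hb : GoodBounds G c) (h : IsRainbowTriangle G c x y z)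
    {s t : V} (hs : s ∈ ({x, y, z} : Set V)) (ht : t ∈ ({x, y, z} : Set V))
    (hs0 : vdeg (G.deleteEdges ({x, y, z} : Set V).sym2) s ≠ 0)
    (ht0 : vdeg (G.deleteEdges ({x, y, z} : Set V).sym2) t ≠ 0) :
    (G.deleteEdges ({x, y, z} : Set V).sym2).Reachable s t := by
  by_cases hst : s = t
  · exact hst ▸ .refl s
  obtain ⟨r, hr, hT⟩ := h.exists_third hs ht hst
  obtain ⟨w, hwT, hsw, htw, -⟩ := hb.exists_common_neighbor hr
    (hb.vdeg_eq_four_of_mem h hs hs0) (hb.vdeg_eq_four_of_mem h ht ht0)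
  rw [hT] at hwT
  have hadj : ∀ {u}, G.Adj u w → (G.deleteEdges ({x, y, z} : Set V).sym2).Adj u w :=
    fun huw => deleteEdges_sym2_adj.mpr ⟨huw, fun hT => hwT hT.2⟩
  exact (hadj hsw).reachable.trans (hadj htw).reachable.symm

/-- `v` must be the common neighbour of `p` and `q` of colour `c s(p, q)`; then `v`'s
monochromatic pair on `p`'s side has that colour too, and its span contains `v`, that pair
and `q`. -/
theorem false_of_split_deleteEdges (hb : GoodBounds G c) (h : IsRainbowTriangle G c x y z)
    {v : V} {A B : Set V}
    (hsplit : IsPseudoblockSplit (G.deleteEdges ({x, y, z} : Set V).sym2) v A B)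
    (hA : HasMonoPairIn (G.deleteEdges ({x, y, z} : Set V).sym2) c v A)
    (hB : HasMonoPairIn (G.deleteEdges ({x, y, z} : Set V).sym2) c v B)
    (hv4 : vdeg (G.deleteEdges ({x, y, z} : Set V).sym2) v = 4) (hvT : v ∉ ({x, y, z} : Set V))
    {p q : V} (hpA : p ∈ A) (hqB : q ∈ B) (hpT : p ∈ ({x, y, z} : Set V))
    (hqT : q ∈ ({x, y, z} : Set V)) (hp0 : vdeg (G.deleteEdges ({x, y, z} : Set V).sym2) p ≠ 0)
    (hq0 : vdeg (G.deleteEdges ({x, y, z} : Set V).sym2) q ≠ 0) : False := by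
  set H := G.deleteEdges ({x, y, z} : Set V).sym2
  have hle : H ≤ G := G.deleteEdges_le _
  have hpv : p ≠ v := fun e => hvT (e ▸ hpT)
  have hqv : q ≠ v := fun e => hvT (e ▸ hqT)
  obtain ⟨r, hr, hT⟩ := h.exists_third hpT hqT (hsplit.ne_of_mem_of_mem hpA hqB hpv)
  obtain ⟨w, hwT, hpw, hqw, hcw⟩ := hb.exists_common_neighbor hr
    (hb.vdeg_eq_four_of_mem h hpT hp0) (hb.vdeg_eq_four_of_mem h hqT hq0)
  rw [hT] at hwT
  have hadj : ∀ {u}, G.Adj u w → H.Adj u w :=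
    fun huw => deleteEdges_sym2_adj.mpr ⟨huw, fun hT => hwT hT.2⟩
  obtain rfl : w = v := hsplit.eq_of_mem_of_mem (hsplit.mem_of_adj hpA hpv (hadj hpw))
    (hsplit.symm.mem_of_adj hqB hqv (hadj hqw))
  obtain ⟨a₁, a₂, ha, ha₁, ha₂, hwa₁, hwa₂, hca⟩ := hA
  obtain ⟨b₁, b₂, hb', hb₁, hb₂, hwb₁, hwb₂, -⟩ := hB
  have hab : ∀ {a b}, a ∈ A → b ∈ B → H.Adj w a → a ≠ b :=
    fun ha hb hwa => hsplit.ne_of_mem_of_mem ha hb hwa.ne'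
  have hpa : p = a₁ ∨ p = a₂ := by
    by_contra! hpa
    have := List.length_le_ncard_of_nodup (l := [a₁, a₂, p, b₁, b₂]) (Set.toFinite _) ?_
      (s := H.neighborSet w) ?_
    · simp only [List.length_cons, List.length_nil] at this
      exact absurd (this.trans_eq hv4) (by norm_num)
    · simp [ha, hpa.1.symm, hpa.2.symm, hab ha₁ hb₁ hwa₁, hab ha₁ hb₂ hwa₁, hab ha₂ hb₁ hwa₂,
        hab ha₂ hb₂ hwa₂, hab hpA hb₁ (hadj hpw).symm, hab hpA hb₂ (hadj hpw).symm, hb']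
    · simp only [List.mem_cons, List.not_mem_nil, or_false]
      rintro u (rfl | rfl | rfl | rfl | rfl)
      exacts [hwa₁, hwa₂, (hadj hpw).symm, hwb₁, hwb₂]
  have hcv : c s(w, a₁) = c s(p, q) := by
    rw [← hcw, Sym2.eq_swap (a := p)]
    rcases hpa with rfl | rfl
    exacts [rfl, hca]
  refine hb.false_of_four_mem_colorSpan (α := c s(p, q)) (l := [w, a₁, a₂, q]) ?_ rfl ?_
  · simp [hwa₁.ne, hwa₂.ne, hqv.symm, ha, hab ha₁ hqB hwa₁, hab ha₂ hqB hwa₂]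
  · simp only [List.mem_cons, List.not_mem_nil, or_false]
    rintro u (rfl | rfl | rfl | rfl)
    exacts [hcv ▸ mem_colorSpan_left (hle hwa₁), hcv ▸ mem_colorSpan_right (hle hwa₁),
      hcv ▸ hca ▸ mem_colorSpan_right (hle hwa₂), mem_colorSpan_right hr.1]

theorem not_isTypeX_deleteEdges (hb : GoodBounds G c) (h : IsRainbowTriangle G c x y z)
    (hX : ∀ v, ¬IsTypeX G c v) (v : V) :
    ¬IsTypeX (G.deleteEdges ({x, y, z} : Set V).sym2) c v := by
  set T : Set V := {x, y, z}
  set H := G.deleteEdges T.sym2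
  have hle : H ≤ G := G.deleteEdges_le _
  rw [isTypeX_iff]
  rintro ⟨hv4, A, B, hsplit, hA, hB⟩
  have hvT : v ∉ T := fun hv => by
    have h2 : vdeg H v = vdeg G v - 2 := h.vdeg_deleteEdges_of_mem hv
    have := hb.vdeg_le_four v
    omega
  refine hX v (isTypeX_iff.mpr ⟨vdeg_deleteEdges_sym2_of_notMem hvT ▸ hv4, ?_⟩)
  have offT : ∀ {S : Set V}, (∀ u ∈ S, u ∈ T → vdeg H u = 0) →
      ∀ a ∈ S, H.Adj v a → a ∈ S \ T :=
    fun hiso a ha hva => ⟨ha, fun haT => vdeg_ne_zero_of_adj hva.symm (hiso a ha haT)⟩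
  by_cases hAiso : ∀ u ∈ A, u ∈ T → vdeg H u = 0
  · exact ⟨A \ T, B ∪ T, hsplit.of_deleteEdges_sym2 hvT hAiso, hA.mono hle (offT hAiso),
      hB.mono hle fun b hb _ => Or.inl hb⟩
  by_cases hBiso : ∀ u ∈ B, u ∈ T → vdeg H u = 0
  · exact ⟨A ∪ T, B \ T, (hsplit.symm.of_deleteEdges_sym2 hvT hBiso).symm,
      hA.mono hle fun a ha _ => Or.inl ha, hB.mono hle (offT hBiso)⟩
  push Not at hAiso hBiso
  obtain ⟨p, hpA, hpT, hp0⟩ := hAiso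
  obtain ⟨q, hqB, hqT, hq0⟩ := hBiso
  exact (hb.false_of_split_deleteEdges h hsplit hA hB hv4 hvT hpA hqB hpT hqT hp0 hq0).elim

end GoodBounds

end DeleteRainbowTriangle

section Main

variable {V C : Type*} [Finite V] {G : SimpleGraph V} {c : Sym2 V → C} {x y z : V}

theorem GoodBounds.deleteEdges_sym2 (hb : GoodBounds G c) (h : IsRainbowTriangle G c x y z) :
    GoodBounds (G.deleteEdges ({x, y, z} : Set V).sym2) c := by
  have hle := G.deleteEdges_le ({x, y, z} : Set V).sym2
  refine ⟨fun u => ?_, fun u => (vdeg_mono hle u).trans (hb.vdeg_le_four u),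
    fun u => (colorDeg_mono hle u).trans (hb.colorDeg_le_two u),
    fun α => (Set.ncard_le_ncard (colorSpan_mono hle α)).trans (hb.colorSpan_ncard_le_three α)⟩
  by_cases hu : u ∈ ({x, y, z} : Set V)
  · rw [h.vdeg_deleteEdges_of_mem hu]
    obtain ⟨k, hk⟩ := hb.even_vdeg u
    exact ⟨k - 1, by omega⟩
  · rw [vdeg_deleteEdges_sym2_of_notMem hu]
    exact hb.even_vdeg u

theorem IsRainbowTriangle.colorDeg_eq_two_of_mem (h : IsRainbowTriangle G c x y z)
    (hb : GoodBounds G c) {u : V} (hu : u ∈ ({x, y, z} : Set V)) : colorDeg G c u = 2 := by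
  obtain ⟨q, r, ⟨huq, -, hur, -, -, hc⟩, -⟩ := h.exists_of_mem hu
  exact hb.colorDeg_eq_two huq hur hc

theorem IsGood.deleteEdges_sym2 (hG : IsGood G c) (h : IsRainbowTriangle G c x y z) :
    IsGood (G.deleteEdges ({x, y, z} : Set V).sym2) c := by
  have hb := hG.goodBounds
  obtain ⟨⟨-, -, htri, hcd, -⟩, hX⟩ := hG
  have hb' := hb.deleteEdges_sym2 h
  refine ⟨⟨hb'.even_vdeg, hb'.vdeg_le_four, htri.mono (G.deleteEdges_le _), fun u hu0 => ?_,
    hb'.colorSpan_ncard_le_three⟩, hb.not_isTypeX_deleteEdges h hX⟩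
  by_cases hu : u ∈ ({x, y, z} : Set V)
  · exact hb.colorDeg_deleteEdges_of_mem h hu hu0
  · rw [vdeg_deleteEdges_sym2_of_notMem hu] at hu0
    rw [colorDeg_deleteEdges_sym2_of_notMem hu]
    exact hcd u hu0

theorem IsAlmostGood.deleteEdges_sym2 (hG : IsAlmostGood G c) (h : IsRainbowTriangle G c x y z) :
    IsAlmostGood (G.deleteEdges ({x, y, z} : Set V).sym2) c := by
  set T : Set V := {x, y, z}
  have hb := hG.goodBounds
  obtain ⟨hconn, -, -, htri, ⟨s, ⟨hs0, hs1⟩, huniq⟩, hdeg2, hcd, -, hX⟩ := hG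
  have hb' := hb.deleteEdges_sym2 h
  have hsT : s ∉ T := fun hsT => by
    have := h.colorDeg_eq_two_of_mem hb hsT
    omega
  have notMem : ∀ u, vdeg (G.deleteEdges T.sym2) u ≠ 0 →
      colorDeg (G.deleteEdges T.sym2) c u = 1 → u ∉ T := fun u hu0 hu1 huT => by
    have : colorDeg (G.deleteEdges T.sym2) c u = 2 := hb.colorDeg_deleteEdges_of_mem h huT hu0
    omega
  refine ⟨hconn.deleteEdges_sym2 fun _ hs _ ht => hb.reachable_deleteEdges_of_mem h hs ht,
    hb'.even_vdeg, hb'.vdeg_le_four, htri.mono (G.deleteEdges_le _), ⟨s, ?_, ?_⟩,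
    fun u hu0 hu1 => ?_, fun u hu0 => ?_, hb'.colorSpan_ncard_le_three,
    hb.not_isTypeX_deleteEdges h hX⟩
  · dsimp only
    rw [vdeg_deleteEdges_sym2_of_notMem hsT, colorDeg_deleteEdges_sym2_of_notMem hsT]
    exact ⟨hs0, hs1⟩
  · rintro u ⟨hu0, hu1⟩
    have hu := notMem u hu0 hu1
    rw [vdeg_deleteEdges_sym2_of_notMem hu, colorDeg_deleteEdges_sym2_of_notMem hu] at *
    exact huniq u ⟨hu0, hu1⟩
  · have hu := notMem u hu0 hu1
    rw [vdeg_deleteEdges_sym2_of_notMem hu, colorDeg_deleteEdges_sym2_of_notMem hu] at *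
    exact hdeg2 u hu0 hu1
  · by_cases hu : u ∈ T
    · exact Or.inr (hb.colorDeg_deleteEdges_of_mem h hu hu0)
    · rw [vdeg_deleteEdges_sym2_of_notMem hu] at hu0
      rw [colorDeg_deleteEdges_sym2_of_notMem hu]
      exact hcd u hu0

end Main

theorem deleteRainbowTriangle_good_or_almostGood_general {V C : Type*} [Fintype V]
    (G : SimpleGraph V) (c : Sym2 V → C)
    (x y z : V) (hxy : G.Adj x y) (hyz : G.Adj y z) (hxz : G.Adj x z)
    (h1 : c s(x, y) ≠ c s(y, z)) (h2 : c s(y, z) ≠ c s(x, z)) (h3 : c s(x, y) ≠ c s(x, z)) :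
    (IsGood G c → IsGood (G.deleteEdges {s(x, y), s(y, z), s(x, z)}) c) ∧
      (IsAlmostGood G c → IsAlmostGood (G.deleteEdges {s(x, y), s(y, z), s(x, z)}) c) := by
  have h : IsRainbowTriangle G c x y z := ⟨hxy, hyz, hxz, h1, h2, h3⟩
  rw [deleteEdges_triangle_eq_sym2]
  exact ⟨fun hG => hG.deleteEdges_sym2 h, fun hG => hG.deleteEdges_sym2 h⟩

/-- If `G` is a good (respectively almost-good) colored graph and `x y z` is a rainbow
triangle in `G`, then the graph obtained by deleting the three edges of the triangle is
good (respectively almost-good). -/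
theorem deleteRainbowTriangle_good_or_almostGood {V C : Type*} [Fintype V] [DecidableEq V]
    (G : SimpleGraph V) (c : Sym2 V → C)
    (x y z : V) (hxy : G.Adj x y) (hyz : G.Adj y z) (hxz : G.Adj x z)
    (h1 : c s(x, y) ≠ c s(y, z)) (h2 : c s(y, z) ≠ c s(x, z)) (h3 : c s(x, y) ≠ c s(x, z)) :
    (IsGood G c → IsGood (G.deleteEdges {s(x, y), s(y, z), s(x, z)}) c) ∧
      (IsAlmostGood G c → IsAlmostGood (G.deleteEdges {s(x, y), s(y, z), s(x, z)}) c) :=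
  deleteRainbowTriangle_good_or_almostGood_general G c x y z hxy hyz hxz h1 h2 h3
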